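/- arXiv:math/0102014 — 2 statements merged into one kernel-verified Lean document; each statement's English description precedes it below -/
import Mathlib

section
/- If a finite-dimensional complex nonabelian nilpotent Lie algebra g is a product by generators (i.e., g ≅ h₁ ×̲ h₂ for nonabelian nilpotent h₁, h₂), then dim Z(g) ≥ 6 and dim(g/[g,g]) ≥ 4. -/
open Module

noncomputable section

/-- Direct sum (product) of two Lie rings. -/
instance prodLieRing (L L' : Type*) [LieRing L] [LieRing L'] : LieRing (L × L') where
  bracket p q := (⁅p.1, q.1⁆, ⁅p.2, q.2⁆)
  add_lie x y z := Prod.ext (add_lie x.1 y.1 z.1) (add_lie x.2 y.2 z.2)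
  lie_add x y z := Prod.ext (lie_add x.1 y.1 z.1) (lie_add x.2 y.2 z.2)
  lie_self x := Prod.ext (lie_self x.1) (lie_self x.2)
  leibniz_lie x y z := Prod.ext (leibniz_lie x.1 y.1 z.1) (leibniz_lie x.2 y.2 z.2)

instance prodLieAlgebra (R L L' : Type*) [CommRing R] [LieRing L] [LieRing L']
    [LieAlgebra R L] [LieAlgebra R L'] : LieAlgebra R (L × L') where
  lie_smul t x y := Prod.ext (lie_smul t x.1 y.1) (lie_smul t x.2 y.2)

/-- A Lie algebra is nonsplit if it is not the direct sum of two nonzero ideals. -/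
def LieAlgebra.Nonsplit (R L : Type*) [CommRing R] [LieRing L] [LieAlgebra R L] : Prop :=
  ¬ ∃ I J : LieIdeal R L, I ≠ ⊥ ∧ J ≠ ⊥ ∧ I ⊓ J = ⊥ ∧ I ⊔ J = ⊤

/-- `g` is nonabelian: some bracket is nonzero. -/
def LieAlgebra.Nonabelian (L : Type*) [LieRing L] : Prop := ∃ x y : L, ⁅x, y⁆ ≠ 0

/-- `L` is the product by generators `g1 ×̲ g2`: the central extension of `g1 ⊕ g2`
by `ℂ^(n1 n2)` given by the cocycle pairing the generators of `g1` with those of `g2`. -/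
structure IsProductByGenerators
    (L g1 g2 : Type*) [LieRing L] [LieAlgebra ℂ L]
    [LieRing g1] [LieAlgebra ℂ g1] [LieRing g2] [LieAlgebra ℂ g2] where
  m1 : ℕ
  m2 : ℕ
  n1 : ℕ
  n2 : ℕ
  two_le_n1 : 2 ≤ n1
  two_le_n2 : 2 ≤ n2
  n1_le : n1 ≤ m1
  n2_le : n2 ≤ m2
  /-- an adapted basis of `g1` -/
  b1 : Basis (Fin m1) ℂ g1
  /-- an adapted basis of `g2` -/
  b2 : Basis (Fin m2) ℂ g2
  /-- the first `n1` basis vectors generate `g1` -/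
  gen1 : Submodule.span ℂ (⇑b1 '' {i : Fin m1 | (i : ℕ) < n1}) ⊔
      (LieAlgebra.derivedSeries ℂ g1 1).toSubmodule = ⊤
  gen2 : Submodule.span ℂ (⇑b2 '' {i : Fin m2 | (i : ℕ) < n2}) ⊔
      (LieAlgebra.derivedSeries ℂ g2 1).toSubmodule = ⊤
  /-- the remaining basis vectors span the derived subalgebra -/
  adapted1 : (LieAlgebra.derivedSeries ℂ g1 1).toSubmodule ≤
      Submodule.span ℂ (⇑b1 '' {i : Fin m1 | n1 ≤ (i : ℕ)})
  adapted2 : (LieAlgebra.derivedSeries ℂ g2 1).toSubmodule ≤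
      Submodule.span ℂ (⇑b2 '' {i : Fin m2 | n2 ≤ (i : ℕ)})
  /-- the cocycle, as a bilinear map `g1 × g2 → ℂ^(n1 n2)` -/
  Φ : g1 →ₗ[ℂ] g2 →ₗ[ℂ] (Fin n1 → Fin n2 → ℂ)
  hΦ : ∀ i j, Φ (b1 i) (b2 j) =
      if h : (i : ℕ) < n1 ∧ (j : ℕ) < n2 then
        Pi.single (⟨i, h.1⟩ : Fin n1) (Pi.single (⟨j, h.2⟩ : Fin n2) (1 : ℂ)) else 0
  /-- the underlying linear identification of `L` with `g1 ⊕ g2 ⊕ ℂ^(n1 n2)` -/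
  e : (g1 × g2 × (Fin n1 → Fin n2 → ℂ)) ≃ₗ[ℂ] L
  bracket_eq : ∀ a a' : g1 × g2 × (Fin n1 → Fin n2 → ℂ),
      ⁅e a, e a'⁆ = e (⁅a.1, a'.1⁆, ⁅a.2.1, a'.2.1⁆, Φ a.1 a'.2.1 - Φ a'.1 a.2.1)

namespace IsProductByGenerators

variable {L g1 g2 : Type*} [LieRing L] [LieAlgebra ℂ L]
  [LieRing g1] [LieAlgebra ℂ g1] [LieRing g2] [LieAlgebra ℂ g2]
  (P : IsProductByGenerators L g1 g2)

/-- inclusion of `g1` -/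
def ι₁ (x : g1) : L := P.e (x, 0, 0)
/-- inclusion of `g2` -/
def ι₂ (y : g2) : L := P.e (0, y, 0)
/-- inclusion of the adjoined center `g3 = ℂ^(n1 n2)` -/
def ι₃ (v : Fin P.n1 → Fin P.n2 → ℂ) : L := P.e (0, 0, v)
/-- projection onto `g1` -/
def p₁ (z : L) : g1 := (P.e.symm z).1
/-- projection onto `g2` -/
def p₂ (z : L) : g2 := (P.e.symm z).2.1
/-- projection onto `g3` -/
def p₃ (z : L) : Fin P.n1 → Fin P.n2 → ℂ := (P.e.symm z).2.2

/-- the component `Dᵢⱼ = pᵢ ∘ D ∘ ιⱼ` of an endomorphism of the product. -/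
def D11 (D : L →ₗ[ℂ] L) (x : g1) : g1 := P.p₁ (D (P.ι₁ x))
def D21 (D : L →ₗ[ℂ] L) (x : g1) : g2 := P.p₂ (D (P.ι₁ x))
def D31 (D : L →ₗ[ℂ] L) (x : g1) : Fin P.n1 → Fin P.n2 → ℂ := P.p₃ (D (P.ι₁ x))
def D12 (D : L →ₗ[ℂ] L) (y : g2) : g1 := P.p₁ (D (P.ι₂ y))
def D22 (D : L →ₗ[ℂ] L) (y : g2) : g2 := P.p₂ (D (P.ι₂ y))
def D32 (D : L →ₗ[ℂ] L) (y : g2) : Fin P.n1 → Fin P.n2 → ℂ := P.p₃ (D (P.ι₂ y))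
def D13 (D : L →ₗ[ℂ] L) (v : Fin P.n1 → Fin P.n2 → ℂ) : g1 := P.p₁ (D (P.ι₃ v))
def D23 (D : L →ₗ[ℂ] L) (v : Fin P.n1 → Fin P.n2 → ℂ) : g2 := P.p₂ (D (P.ι₃ v))
def D33 (D : L →ₗ[ℂ] L) (v : Fin P.n1 → Fin P.n2 → ℂ) : Fin P.n1 → Fin P.n2 → ℂ :=
  P.p₃ (D (P.ι₃ v))

end IsProductByGenerators

/-- `IsDerivation D`: `D` satisfies the Leibniz rule. -/
def IsDerivation {L : Type*} [LieRing L] [LieAlgebra ℂ L] (D : L →ₗ[ℂ] L) : Prop :=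
  ∀ x y : L, D ⁅x, y⁆ = ⁅D x, y⁆ + ⁅x, D y⁆

/-- the descending sequence `g^{[k]}`, with `g^{[1]} = Der(g)(g)`,
`g^{[k+1]} = Der(g)(g^{[k]})`. -/
def derPow (g : Type*) [LieRing g] [LieAlgebra ℂ g] : ℕ → Submodule ℂ g
  | 0 => ⊤
  | k + 1 => Submodule.span ℂ
      {x | ∃ D : g →ₗ[ℂ] g, IsDerivation D ∧ ∃ y ∈ derPow g k, x = D y}

/-- characteristically nilpotent: `g^{[m]} = 0` for some `m`. -/
def CharacteristicallyNilpotent (g : Type*) [LieRing g] [LieAlgebra ℂ g] : Prop :=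
  ∃ m, 1 ≤ m ∧ derPow g m = ⊥

/-- An S-algebra: for any Lie algebra `g2` and any derivation `D` of `g1 ×̲ g2`,
the component `D₂₁ = p₂ ∘ D ∘ p₁` maps `g1` into `[g2, g2]`. -/
def IsSAlgebra (g1 : Type) [LieRing g1] [LieAlgebra ℂ g1] : Prop :=
  ∀ (g2 L : Type) (_ : LieRing g2) (_ : LieAlgebra ℂ g2) (_ : LieRing L)
    (_ : LieAlgebra ℂ L) (P : IsProductByGenerators L g1 g2) (D : L →ₗ[ℂ] L),
    IsDerivation D → ∀ x : g1, P.D21 D x ∈ LieAlgebra.derivedSeries ℂ g2 1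

/-- nilpotency index: smallest `k` with `C^k g = 0` (`C¹g = [g,g]`). -/
noncomputable def nilindex (g : Type*) [LieRing g] [LieAlgebra ℂ g] : ℕ :=
  sInf {k | LieModule.lowerCentralSeries ℂ g g k = ⊥}

/-- dimension as complex vector space -/
def fdim (g : Type*) [LieRing g] [LieAlgebra ℂ g] : ℕ := finrank ℂ g

/-- dimension of the center -/
def zdim (g : Type*) [LieRing g] [LieAlgebra ℂ g] : ℕ :=
  finrank ℂ (LieAlgebra.center ℂ g).toSubmodule

/-- dimension of the derived subalgebra `C¹g = [g,g]` -/
def ddim (g : Type*) [LieRing g] [LieAlgebra ℂ g] : ℕ :=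
  finrank ℂ (LieAlgebra.derivedSeries ℂ g 1).toSubmodule

/-- minimal number of generators of a nilpotent Lie algebra: `dim g/[g,g]` -/
def gdim (g : Type*) [LieRing g] [LieAlgebra ℂ g] : ℕ :=
  finrank ℂ (g ⧸ (LieAlgebra.derivedSeries ℂ g 1).toSubmodule)

def FinDim (g : Type*) [LieRing g] [LieAlgebra ℂ g] : Prop := FiniteDimensional ℂ g

/-- existence of a Lie algebra isomorphism -/
def LieIso (L L' : Type*) [LieRing L] [LieAlgebra ℂ L] [LieRing L'] [LieAlgebra ℂ L'] : Prop :=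
  Nonempty (L ≃ₗ⁅ℂ⁆ L')

/-!
The cocycle `Φ` only pairs the generators of `h₁` with those of `h₂`, so it vanishes on
`[h₁, h₁]` and on `[h₂, h₂]`. Hence `(Z(h₁) ∩ [h₁, h₁]) ⊕ (Z(h₂) ∩ [h₂, h₂]) ⊕ ℂ^(n₁n₂)` is
central in `g`; the first two summands are nonzero because a nonabelian nilpotent Lie algebra
has a nonzero central commutator, and `n₁n₂ ≥ 4`. Dually `[g, g] ⊆ [h₁, h₁] ⊕ [h₂, h₂] ⊕ ℂ^(n₁n₂)`,
a subspace of codimension at least `n₁ + n₂ ≥ 4`.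
-/

section

variable {K M N : Type*} [DivisionRing K] [AddCommGroup M] [Module K M]
  [AddCommGroup N] [Module K N]

theorem Submodule.finrank_prod [FiniteDimensional K M] [FiniteDimensional K N]
    (p : Submodule K M) (q : Submodule K N) :
    finrank K (p.prod q) = finrank K p + finrank K q := by
  have := LinearMap.finrank_range_of_inj (f := p.subtype.prodMap q.subtype)
    (Prod.map_injective.2 ⟨p.injective_subtype, q.injective_subtype⟩)
  rwa [LinearMap.range_prodMap, p.range_subtype, q.range_subtype, Module.finrank_prod] at this

open Finset in
theorem Fin.card_subtype_le_val (m n : ℕ) :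
    Fintype.card {i : Fin m // n ≤ (i : ℕ)} = m - n := by
  have h := card_filter_add_card_filter_not (s := (univ : Finset (Fin m))) (fun i => (i : ℕ) < n)
  simp only [not_lt, Fin.card_filter_val_lt, card_univ, Fintype.card_fin] at h
  rw [Fintype.card_subtype]
  omega

theorem Module.Basis.finrank_add_le_of_le_span_image_ge {m n : ℕ} (b : Basis (Fin m) K M)
    (hn : n ≤ m) {p : Submodule K M} (hp : p ≤ Submodule.span K (b '' {i | n ≤ (i : ℕ)})) :
    finrank K p + n ≤ finrank K M := by
  have : FiniteDimensional K M := b.finiteDimensional_of_finite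
  have hspan : finrank K (Submodule.span K (b '' {i | n ≤ (i : ℕ)})) ≤ m - n := by
    rw [Set.image_eq_range, ← Fin.card_subtype_le_val]
    exact finrank_range_le_card _
  have := Submodule.finrank_mono hp
  rw [finrank_eq_card_basis b, Fintype.card_fin]
  omega

end

theorem LieAlgebra.Nonabelian.finrank_center_inf_derivedSeries_pos {K L : Type*} [Field K]
    [LieRing L] [LieAlgebra K L] [FiniteDimensional K L] [LieRing.IsNilpotent L]
    (h : LieAlgebra.Nonabelian L) :
    0 < finrank K ↥((center K L).toSubmodule ⊓ (derivedSeries K L 1).toSubmodule) := by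
  obtain ⟨x, y, hxy⟩ := h
  have hnd : ¬ Disjoint (derivedSeries K L 1) (center K L) := fun hd =>
    hxy (((LieModule.disjoint_lowerCentralSeries_maxTrivSubmodule_iff K L L).mp hd).trivial x y)
  rw [← LieSubmodule.disjoint_toSubmodule] at hnd
  exact Nat.pos_of_ne_zero fun h0 => hnd (disjoint_iff.mpr (Submodule.finrank_eq_zero.mp h0)).symm

theorem LieAlgebra.lie_mem_derivedSeries_one {R L : Type*} [CommRing R] [LieRing L]
    [LieAlgebra R L] (x y : L) : ⁅x, y⁆ ∈ derivedSeries R L 1 :=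
  LieSubmodule.lie_mem_lie (LieSubmodule.mem_top x) (LieSubmodule.mem_top y)

namespace IsProductByGenerators

open LieAlgebra

variable {L g1 g2 : Type*} [LieRing L] [LieAlgebra ℂ L]
  [LieRing g1] [LieAlgebra ℂ g1] [LieRing g2] [LieAlgebra ℂ g2]

theorem finiteDimensional_left (P : IsProductByGenerators L g1 g2) : FiniteDimensional ℂ g1 :=
  Module.Finite.of_basis P.b1

theorem finiteDimensional_right (P : IsProductByGenerators L g1 g2) : FiniteDimensional ℂ g2 :=
  Module.Finite.of_basis P.b2

theorem finiteDimensional (P : IsProductByGenerators L g1 g2) : FiniteDimensional ℂ L :=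
  have := P.finiteDimensional_left
  have := P.finiteDimensional_right
  P.e.finiteDimensional

variable (P : IsProductByGenerators L g1 g2)

theorem finrank_eq :
    finrank ℂ L = finrank ℂ g1 + (finrank ℂ g2 + P.n1 * P.n2) := by
  have := P.finiteDimensional_left
  have := P.finiteDimensional_right
  rw [← P.e.finrank_eq, Module.finrank_prod, Module.finrank_prod]
  simp [Module.finrank_pi_fintype]

theorem Φ_eq_zero_of_mem_derivedSeries_left {x : g1} (hx : x ∈ derivedSeries ℂ g1 1) :
    P.Φ x = 0 := by
  suffices Submodule.span ℂ (P.b1 '' {i | P.n1 ≤ (i : ℕ)}) ≤ LinearMap.ker P.Φ from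
    this (P.adapted1 hx)
  rw [Submodule.span_le]
  rintro _ ⟨i, hi, rfl⟩
  refine P.b2.ext fun j => ?_
  rw [P.hΦ, dif_neg (not_and_of_not_left _ (not_lt.2 hi)), LinearMap.zero_apply]

theorem Φ_eq_zero_of_mem_derivedSeries_right (x : g1) {y : g2}
    (hy : y ∈ derivedSeries ℂ g2 1) : P.Φ x y = 0 := by
  suffices Submodule.span ℂ (P.b2 '' {j | P.n2 ≤ (j : ℕ)}) ≤ LinearMap.ker P.Φ.flip from
    LinearMap.congr_fun (this (P.adapted2 hy)) x
  rw [Submodule.span_le]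
  rintro _ ⟨j, hj, rfl⟩
  refine P.b1.ext fun i => ?_
  rw [LinearMap.flip_apply, P.hΦ, dif_neg (not_and_of_not_right _ (not_lt.2 hj)),
    LinearMap.zero_apply]

theorem map_prod_le_center :
    Submodule.map P.e.toLinearMap
        (((center ℂ g1).toSubmodule ⊓ (derivedSeries ℂ g1 1).toSubmodule).prod
          (((center ℂ g2).toSubmodule ⊓ (derivedSeries ℂ g2 1).toSubmodule).prod ⊤)) ≤
      (center ℂ L).toSubmodule := by
  rintro _ ⟨⟨x, y, v⟩, ⟨⟨hxc, hxd⟩, ⟨hyc, hyd⟩, -⟩, rfl⟩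
  refine (LieModule.mem_maxTrivSubmodule ℂ L L _).mpr fun w => ?_
  obtain ⟨⟨x', y', v'⟩, rfl⟩ := P.e.surjective w
  rw [LinearEquiv.coe_coe, P.bracket_eq, P.Φ_eq_zero_of_mem_derivedSeries_left hxd,
    P.Φ_eq_zero_of_mem_derivedSeries_right _ hyd,
    (LieModule.mem_maxTrivSubmodule ℂ g1 g1 x).mp hxc,
    (LieModule.mem_maxTrivSubmodule ℂ g2 g2 y).mp hyc]
  simp

theorem derivedSeries_le_map_prod :
    (derivedSeries ℂ L 1).toSubmodule ≤
      ((derivedSeries ℂ g1 1).toSubmodule.prod ((derivedSeries ℂ g2 1).toSubmodule.prod ⊤)).map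
        P.e.toLinearMap := by
  rw [← LieIdeal.toLieSubalgebra_toSubmodule, coe_derivedSeries_one_eq, Submodule.span_le]
  rintro _ ⟨u, w, rfl⟩
  obtain ⟨⟨x, y, v⟩, rfl⟩ := P.e.surjective u
  obtain ⟨⟨x', y', v'⟩, rfl⟩ := P.e.surjective w
  rw [P.bracket_eq]
  exact Submodule.mem_map_of_mem
    ⟨lie_mem_derivedSeries_one x x', lie_mem_derivedSeries_one y y', Submodule.mem_top⟩

theorem finrank_map_prod (p : Submodule ℂ g1) (q : Submodule ℂ g2) :
    finrank ℂ (Submodule.map P.e.toLinearMap (p.prod (q.prod ⊤))) =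
      finrank ℂ p + (finrank ℂ q + P.n1 * P.n2) := by
  have := P.finiteDimensional_left
  have := P.finiteDimensional_right
  rw [LinearEquiv.finrank_map_eq, Submodule.finrank_prod, Submodule.finrank_prod, finrank_top]
  simp [Module.finrank_pi_fintype]

theorem finrank_add_le_zdim :
    finrank ℂ ↥((center ℂ g1).toSubmodule ⊓ (derivedSeries ℂ g1 1).toSubmodule) +
        (finrank ℂ ↥((center ℂ g2).toSubmodule ⊓ (derivedSeries ℂ g2 1).toSubmodule) +
          P.n1 * P.n2) ≤ zdim L := by
  have := P.finiteDimensional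
  rw [← P.finrank_map_prod]
  exact Submodule.finrank_mono P.map_prod_le_center

theorem add_le_gdim : P.n1 + P.n2 ≤ gdim L := by
  have := P.finiteDimensional
  have hquot := (derivedSeries ℂ L 1).toSubmodule.finrank_quotient_add_finrank
  have hder := Submodule.finrank_mono P.derivedSeries_le_map_prod
  have h1 := P.b1.finrank_add_le_of_le_span_image_ge P.n1_le P.adapted1
  have h2 := P.b2.finrank_add_le_of_le_span_image_ge P.n2_le P.adapted2
  rw [P.finrank_map_prod] at hder
  rw [P.finrank_eq] at hquot
  unfold gdim
  omega

end IsProductByGenerators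

theorem statement_4_general (g h1 h2 : Type) [LieRing g] [LieAlgebra ℂ g]
    [LieRing h1] [LieAlgebra ℂ h1] [LieRing h2] [LieAlgebra ℂ h2]
    [LieRing.IsNilpotent h1] [LieRing.IsNilpotent h2]
    (hna1 : LieAlgebra.Nonabelian h1) (hna2 : LieAlgebra.Nonabelian h2)
    (P : IsProductByGenerators g h1 h2) :
    6 ≤ zdim g ∧ 4 ≤ gdim g := by
  have := P.finiteDimensional_left
  have := P.finiteDimensional_right
  have hz1 := hna1.finrank_center_inf_derivedSeries_pos (K := ℂ)
  have hz2 := hna2.finrank_center_inf_derivedSeries_pos (K := ℂ)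
  have hn := Nat.mul_le_mul P.two_le_n1 P.two_le_n2
  exact ⟨by linarith [P.finrank_add_le_zdim],
    by linarith [P.add_le_gdim, P.two_le_n1, P.two_le_n2]⟩

/-- if `g` is a product by generators (of nonabelian nilpotent algebras),
then `dim Z(g) ≥ 6` and `dim g/[g,g] ≥ 4`. -/
theorem statement_4 (g h1 h2 : Type) [LieRing g] [LieAlgebra ℂ g]
    [LieRing h1] [LieAlgebra ℂ h1] [LieRing h2] [LieAlgebra ℂ h2]
    [FiniteDimensional ℂ h1] [FiniteDimensional ℂ h2]
    [LieRing.IsNilpotent h1] [LieRing.IsNilpotent h2]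
    [FiniteDimensional ℂ g] [LieRing.IsNilpotent g]
    (hna1 : LieAlgebra.Nonabelian h1) (hna2 : LieAlgebra.Nonabelian h2)
    (P : IsProductByGenerators g h1 h2) :
    6 ≤ zdim g ∧ 4 ≤ gdim g :=
  statement_4_general g h1 h2 hna1 hna2 P
end
end

section
/- Let D be a derivation of g₁ ×̲ g₂ with components D_{ij} = pᵢ ∘ D ∘ pⱼ. Then D₁₃(g₃) ⊂ Z(g₁) and D₂₃(g₃) ⊂ Z(g₂), where Z(gᵢ) is the center of gᵢ. -/
open Module

noncomputable section

/-! The adjoined summand `g₃` is central in `g₁ ×̲ g₂`, and a derivation maps the centre into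
itself. The projections `p₁`, `p₂` are surjective Lie algebra morphisms, so they map the centre of
`g₁ ×̲ g₂` into the centres of `g₁` and `g₂`. -/

theorem IsDerivation.map_mem_center {L : Type*} [LieRing L] [LieAlgebra ℂ L]
    {D : L →ₗ[ℂ] L} (hD : IsDerivation D) {z : L} (hz : z ∈ LieAlgebra.center ℂ L) :
    D z ∈ LieAlgebra.center ℂ L := by
  rw [LieModule.mem_maxTrivSubmodule] at hz ⊢
  intro x
  have h := hD x z
  rwa [hz, map_zero, hz, zero_add, eq_comm] at h

namespace IsProductByGenerators

variable {L g1 g2 : Type*} [LieRing L] [LieAlgebra ℂ L]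
  [LieRing g1] [LieAlgebra ℂ g1] [LieRing g2] [LieAlgebra ℂ g2]
  (P : IsProductByGenerators L g1 g2)

theorem e_symm_lie (z z' : L) :
    P.e.symm ⁅z, z'⁆ = (⁅(P.e.symm z).1, (P.e.symm z').1⁆, ⁅(P.e.symm z).2.1, (P.e.symm z').2.1⁆,
      P.Φ (P.e.symm z).1 (P.e.symm z').2.1 - P.Φ (P.e.symm z').1 (P.e.symm z).2.1) := by
  have h := P.bracket_eq (P.e.symm z) (P.e.symm z')
  rw [LinearEquiv.apply_symm_apply, LinearEquiv.apply_symm_apply] at h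
  rw [h, LinearEquiv.symm_apply_apply]

theorem p₁_lie (z z' : L) : P.p₁ ⁅z, z'⁆ = ⁅P.p₁ z, P.p₁ z'⁆ := by
  simp only [p₁, e_symm_lie]

theorem p₂_lie (z z' : L) : P.p₂ ⁅z, z'⁆ = ⁅P.p₂ z, P.p₂ z'⁆ := by
  simp only [p₂, e_symm_lie]

theorem p₁_ι₁ (x : g1) : P.p₁ (P.ι₁ x) = x := by
  simp only [p₁, ι₁, LinearEquiv.symm_apply_apply]

theorem p₂_ι₂ (y : g2) : P.p₂ (P.ι₂ y) = y := by
  simp only [p₂, ι₂, LinearEquiv.symm_apply_apply]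

theorem ι₃_mem_center (v : Fin P.n1 → Fin P.n2 → ℂ) : P.ι₃ v ∈ LieAlgebra.center ℂ L := by
  rw [LieModule.mem_maxTrivSubmodule]
  intro z
  apply P.e.symm.injective
  simp [ι₃, e_symm_lie]

theorem p₁_mem_center {z : L} (hz : z ∈ LieAlgebra.center ℂ L) :
    P.p₁ z ∈ LieAlgebra.center ℂ g1 := by
  rw [LieModule.mem_maxTrivSubmodule] at hz ⊢
  intro x
  rw [← P.p₁_ι₁ x, ← p₁_lie, hz, p₁, map_zero, Prod.fst_zero]

theorem p₂_mem_center {z : L} (hz : z ∈ LieAlgebra.center ℂ L) :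
    P.p₂ z ∈ LieAlgebra.center ℂ g2 := by
  rw [LieModule.mem_maxTrivSubmodule] at hz ⊢
  intro y
  rw [← P.p₂_ι₂ y, ← p₂_lie, hz, p₂, map_zero, Prod.snd_zero, Prod.fst_zero]

end IsProductByGenerators

theorem statement_10_general (L g1 g2 : Type) [LieRing L] [LieAlgebra ℂ L]
    [LieRing g1] [LieAlgebra ℂ g1] [LieRing g2] [LieAlgebra ℂ g2]
    (P : IsProductByGenerators L g1 g2)
    (D : L →ₗ[ℂ] L) (hD : IsDerivation D) :
    (∀ v : Fin P.n1 → Fin P.n2 → ℂ, P.D13 D v ∈ LieAlgebra.center ℂ g1) ∧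
    (∀ v : Fin P.n1 → Fin P.n2 → ℂ, P.D23 D v ∈ LieAlgebra.center ℂ g2) :=
  ⟨fun v => P.p₁_mem_center (hD.map_mem_center (P.ι₃_mem_center v)),
    fun v => P.p₂_mem_center (hD.map_mem_center (P.ι₃_mem_center v))⟩

/-- for a derivation `D` of `g1 ×̲ g2`, `D₁₃(g3) ⊆ Z(g1)` and
`D₂₃(g3) ⊆ Z(g2)`. -/
theorem statement_10 (L g1 g2 : Type) [LieRing L] [LieAlgebra ℂ L]
    [LieRing g1] [LieAlgebra ℂ g1] [LieRing g2] [LieAlgebra ℂ g2]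
    [FiniteDimensional ℂ g1] [FiniteDimensional ℂ g2]
    [LieRing.IsNilpotent g1] [LieRing.IsNilpotent g2]
    (P : IsProductByGenerators L g1 g2)
    (D : L →ₗ[ℂ] L) (hD : IsDerivation D) :
    (∀ v : Fin P.n1 → Fin P.n2 → ℂ, P.D13 D v ∈ LieAlgebra.center ℂ g1) ∧
    (∀ v : Fin P.n1 → Fin P.n2 → ℂ, P.D23 D v ∈ LieAlgebra.center ℂ g2) :=
  statement_10_general L g1 g2 P D hD
end
end
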